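/- Let C be a C*-algebra and let {p_λ} be a family of mutually orthogonal projections in the multiplier algebra M(C) whose sum equals 1 in the bidual C**. Then the linear span of the sets p_λ·C over all λ is norm dense in C. -/

import Mathlib

open scoped MultiplierAlgebra ComplexOrder
open MeasureTheory

noncomputable section

namespace Paper

/-- The double commutant (bicommutant) of a set of bounded operators on a Hilbert space. -/
def dblComm {H : Type} [NormedAddCommGroup H] [InnerProductSpace ℂ H]
    (S : Set (H →L[ℂ] H)) : Set (H →L[ℂ] H) :=
  Set.centralizer (Set.centralizer S)

/-- A set of operators generates a factor: the center of the generated von Neumann algebra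
consists of scalar multiples of the identity. -/
def IsFactorSet {H : Type} [NormedAddCommGroup H] [InnerProductSpace ℂ H]
    (S : Set (H →L[ℂ] H)) : Prop :=
  ∀ x ∈ Set.centralizer S ∩ dblComm S, ∃ z : ℂ, x = z • (1 : H →L[ℂ] H)

/-- A von Neumann factor is of type I iff it possesses a minimal projection. -/
def HasMinimalProjection {H : Type} [NormedAddCommGroup H] [InnerProductSpace ℂ H]
    [CompleteSpace H] (M : Set (H →L[ℂ] H)) : Prop :=
  ∃ p ∈ M, star p = p ∧ p * p = p ∧ p ≠ 0 ∧
    ∀ q ∈ M, star q = q → q * q = q → q * p = q → p * q = q → q = 0 ∨ q = p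

section Reps

variable {C : Type} [NonUnitalRing C] [StarRing C] [Module ℂ C]
variable {H : Type} [NormedAddCommGroup H] [InnerProductSpace ℂ H] [CompleteSpace H]

/-- A representation is nondegenerate if the vectors `π a x` span a dense subspace. -/
def IsNondegenerate (π : C →⋆ₙₐ[ℂ] (H →L[ℂ] H)) : Prop :=
  Dense (Submodule.span ℂ {v : H | ∃ a x, v = π a x} : Set H)

/-- A factor representation: the von Neumann algebra generated by the range is a factor. -/
def IsFactorRep (π : C →⋆ₙₐ[ℂ] (H →L[ℂ] H)) : Prop :=
  IsFactorSet (Set.range π)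

/-- An irreducible representation: nonzero, with no nontrivial closed invariant subspaces. -/
def IsIrreducibleRep (π : C →⋆ₙₐ[ℂ] (H →L[ℂ] H)) : Prop :=
  (∃ a, π a ≠ 0) ∧ ∀ V : Submodule ℂ H, IsClosed (V : Set H) →
    (∀ a, ∀ v ∈ V, π a v ∈ V) → V = ⊥ ∨ V = ⊤

end Reps

/-- A C*-algebra is of type I if every (nonzero, nondegenerate) factor representation
generates a type I factor, i.e. one possessing a minimal projection. -/
def IsTypeI (C : Type) [NonUnitalRing C] [StarRing C] [Module ℂ C] : Prop :=
  ∀ (H : Type) [NormedAddCommGroup H] [InnerProductSpace ℂ H] [CompleteSpace H]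
    (π : C →⋆ₙₐ[ℂ] (H →L[ℂ] H)),
    IsNondegenerate π → (∃ a, π a ≠ 0) → IsFactorRep π →
      HasMinimalProjection (dblComm (Set.range π))

/-- A C*-algebra is liminal (CCR) if every irreducible representation has range consisting of
compact operators. -/
def IsLiminal (C : Type) [NonUnitalRing C] [StarRing C] [Module ℂ C] : Prop :=
  ∀ (H : Type) [NormedAddCommGroup H] [InnerProductSpace ℂ H] [CompleteSpace H]
    (π : C →⋆ₙₐ[ℂ] (H →L[ℂ] H)),
    IsIrreducibleRep π → ∀ a, IsCompactOperator (π a)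

/-- A subset `M ⊆ B(H)` (e.g. a von Neumann algebra) is injective if there is a norm-one
idempotent linear map of `B(H)` onto `M`. -/
def InjectiveVN {H : Type} [NormedAddCommGroup H] [InnerProductSpace ℂ H] [CompleteSpace H]
    (M : Set (H →L[ℂ] H)) : Prop :=
  ∃ E : (H →L[ℂ] H) →L[ℂ] (H →L[ℂ] H), ‖E‖ ≤ 1 ∧ (∀ x, E x ∈ M) ∧ ∀ m ∈ M, E m = m

/-- A C*-algebra is nuclear iff its bidual is injective, equivalently iff every
(nondegenerate) representation generates an injective von Neumann algebra. -/
def IsNuclear (C : Type) [NonUnitalRing C] [StarRing C] [Module ℂ C] : Prop :=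
  ∀ (H : Type) [NormedAddCommGroup H] [InnerProductSpace ℂ H] [CompleteSpace H]
    (π : C →⋆ₙₐ[ℂ] (H →L[ℂ] H)),
    IsNondegenerate π → InjectiveVN (dblComm (Set.range π))

/-- A linear (or just plain) map between C*-algebras is completely positive iff all the
canonical matrix positivity conditions hold. -/
def CompletelyPositive {A : Type} [NonUnitalRing A] [StarRing A] [Module ℂ A] [PartialOrder A]
    (P : A → A) : Prop :=
  ∀ (n : ℕ) (a c : Fin n → A),
    0 ≤ ∑ i, ∑ j, star (c i) * P (star (a i) * a j) * c j


theorem Submodule.dense_of_forall_strongDual_eq_zero {𝕜 E : Type*} [RCLike 𝕜]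
    [NormedAddCommGroup E] [NormedSpace 𝕜 E] (S : Submodule 𝕜 E)
    (h : ∀ φ : StrongDual 𝕜 E, (∀ x ∈ S, φ x = 0) → φ = 0) : Dense (S : Set E) := by
  rw [Submodule.dense_iff_topologicalClosure_eq_top, Submodule.eq_top_iff']
  by_contra! ⟨x, hx⟩
  set T := S.topologicalClosure
  -- makes `E ⧸ T` a normed space, whose dual separates the nonzero class of `x`
  have : IsClosed (T : Set E) := S.isClosed_topologicalClosure
  obtain ⟨f, hf⟩ := SeparatingDual.exists_ne_zero (R := 𝕜) <|
    (Submodule.Quotient.mk_eq_zero T).not.mpr hx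
  refine hf ?_
  have := h (f.comp T.mkQL) fun s hs ↦ by
    simp [(Submodule.Quotient.mk_eq_zero T).mpr (S.le_topologicalClosure hs)]
  simpa using congr($this x)

theorem stmt0_general {C : Type} [NonUnitalCStarAlgebra C] {Λ : Type} (p : Λ → 𝓜(ℂ, C))
    (hsum : ∀ (φ : C →L[ℂ] ℂ) (c : C), HasSum (fun lam => φ ((p lam).toProd.1 c)) (φ c)) :
    Dense (Submodule.span ℂ (⋃ lam, Set.range fun c : C => (p lam).toProd.1 c) : Set C) := by
  refine Submodule.dense_of_forall_strongDual_eq_zero _ fun φ hφ ↦ ?_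
  ext c
  have hterm (lam : Λ) : φ ((p lam).toProd.1 c) = 0 :=
    hφ _ (Submodule.subset_span (Set.mem_iUnion.2 ⟨lam, c, rfl⟩))
  have hzero : HasSum (fun lam => φ ((p lam).toProd.1 c)) 0 := by
    simpa only [hterm] using hasSum_zero
  simpa using (hsum φ c).unique hzero

/-- if `{p lam}` is a family of mutually orthogonal projections in the multiplier
algebra `M(C)` summing to `1` in the bidual `C**` (expressed weak*-ly: tested against every
bounded functional on every element of `C`), then the span of the sets `p lam • C` is dense. -/
theorem stmt0 {C : Type} [NonUnitalCStarAlgebra C] {Λ : Type} (p : Λ → 𝓜(ℂ, C))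
    (hsa : ∀ lam, star (p lam) = p lam) (hidem : ∀ lam, p lam * p lam = p lam)
    (horth : ∀ lam mu, lam ≠ mu → p lam * p mu = 0)
    (hsum : ∀ (φ : C →L[ℂ] ℂ) (c : C), HasSum (fun lam => φ ((p lam).toProd.1 c)) (φ c)) :
    Dense (Submodule.span ℂ (⋃ lam, Set.range fun c : C => (p lam).toProd.1 c) : Set C) :=
  stmt0_general p hsum

end Paper
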